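/- arXiv:2503.06538 — 8 statements merged into one kernel-verified Lean document; each statement's English description precedes it below -/
import Mathlib

section
/- For every integer t with 1 ≤ t < c and S_t(p_{+·}) ≠ 1, the measure λ^{(t)}_{Y|X} = (∑_{i=1}^{r} S_t(p_{i·}) − S_t(p_{+·})) / (1 − S_t(p_{+·})) satisfies 0 ≤ λ^{(t)}_{Y|X} ≤ 1. -/
/-- `Smax t q` : the maximum, over subsets `T` of the index type with `T.card = t`,
of `∑ j ∈ T, q j` (i.e. the sum of the `t` largest entries of `q`). -/
noncomputable def Smax {n : ℕ} (t : ℕ) (q : Fin n → ℝ) : ℝ :=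
  sSup ((fun T : Finset (Fin n) => ∑ j ∈ T, q j) '' {T : Finset (Fin n) | T.card = t})

/-- Row marginals `p_{i+}`. -/
noncomputable def rowMarg {r c : ℕ} (p : Fin r → Fin c → ℝ) : Fin r → ℝ :=
  fun i => ∑ j, p i j

/-- Column marginals `p_{+j}`. -/
noncomputable def colMarg {r c : ℕ} (p : Fin r → Fin c → ℝ) : Fin c → ℝ :=
  fun j => ∑ i, p i j

/-- The measure `λ^{(t)}_{Y|X}` based on multi-categorical proportional reduction in error. -/
noncomputable def lambdaT {r c : ℕ} (t : ℕ) (p : Fin r → Fin c → ℝ) : ℝ :=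
  (∑ i, Smax t (p i) - Smax t (colMarg p)) / (1 - Smax t (colMarg p))

/-- The alternative measure `λ^{K(t)}_{Y|X}`. -/
noncomputable def lambdaKT {r c : ℕ} (t : ℕ) (p : Fin r → Fin c → ℝ) : ℝ :=
  (Real.sqrt (∑ i, (Smax t (p i)) ^ 2 / rowMarg p i) - Smax t (colMarg p)) /
    (1 - Smax t (colMarg p))

/-! Both bounds come from two estimates: `S_t` of a nonnegative row is at most the row total,
and `S_t` is subadditive, so `S_t` of the column marginals is at most `∑ i, S_t (p i)`, which in
turn is at most the total mass `1`. Hence the numerator lies between `0` and the denominator. -/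

namespace Smax

variable {n t : ℕ}

theorem sum_le_Smax (q : Fin n → ℝ) {T : Finset (Fin n)} (hT : T.card = t) :
    ∑ j ∈ T, q j ≤ Smax t q :=
  le_csSup ((Set.toFinite _).image _).bddAbove ⟨T, hT, rfl⟩

theorem le_of_forall_sum_le {q : Fin n → ℝ} {B : ℝ} (htn : t ≤ n)
    (h : ∀ T : Finset (Fin n), T.card = t → ∑ j ∈ T, q j ≤ B) : Smax t q ≤ B := by
  obtain ⟨T, -, hT⟩ :=
    Finset.exists_subset_card_eq (s := (Finset.univ : Finset (Fin n))) (by simpa using htn)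
  exact csSup_le ⟨_, T, hT, rfl⟩ (by rintro x ⟨T', hT', rfl⟩; exact h T' hT')

theorem le_sum_univ {q : Fin n → ℝ} (hq : 0 ≤ q) (htn : t ≤ n) : Smax t q ≤ ∑ j, q j :=
  le_of_forall_sum_le htn fun T _ =>
    Finset.sum_le_sum_of_subset_of_nonneg T.subset_univ fun j _ _ => hq j

theorem sum_le_sum_Smax {ι : Type*} (s : Finset ι) (q : ι → Fin n → ℝ) (htn : t ≤ n) :
    Smax t (fun j => ∑ i ∈ s, q i j) ≤ ∑ i ∈ s, Smax t (q i) :=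
  le_of_forall_sum_le htn fun T hT => by
    rw [Finset.sum_comm]
    exact Finset.sum_le_sum fun i _ => sum_le_Smax (q i) hT

end Smax

theorem Smax_colMarg_le_sum_Smax {r c t : ℕ} (p : Fin r → Fin c → ℝ) (htc : t ≤ c) :
    Smax t (colMarg p) ≤ ∑ i, Smax t (p i) :=
  Smax.sum_le_sum_Smax Finset.univ p htc

theorem sum_Smax_le_one {r c t : ℕ} {p : Fin r → Fin c → ℝ} (hp : ∀ i j, 0 ≤ p i j)
    (hsum : ∑ i, ∑ j, p i j = 1) (htc : t ≤ c) : ∑ i, Smax t (p i) ≤ 1 :=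
  hsum ▸ Finset.sum_le_sum fun i _ => Smax.le_sum_univ (hp i) htc

theorem lambdaT_mem_unitInterval_general
    (r c : ℕ)
    (p : Fin r → Fin c → ℝ) (hp : ∀ i j, 0 ≤ p i j)
    (hsum : ∑ i, ∑ j, p i j = 1)
    (t : ℕ) (htc : t < c)
    (hS : Smax t (colMarg p) ≠ 1) :
    0 ≤ lambdaT t p ∧ lambdaT t p ≤ 1 := by
  have hcol := Smax_colMarg_le_sum_Smax p htc.le
  have hrows := sum_Smax_le_one hp hsum htc.le
  have hden : 0 < 1 - Smax t (colMarg p) := sub_pos.2 <| (hcol.trans hrows).lt_of_ne hS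
  refine ⟨div_nonneg (sub_nonneg.2 hcol) hden.le, ?_⟩
  rw [lambdaT, div_le_one hden]
  linarith

/-- For `1 ≤ t < c` with `S_t(p_{+·}) ≠ 1`,
the measure `λ^{(t)}_{Y|X}` lies in `[0,1]`. -/
theorem lambdaT_mem_unitInterval
    (r c : ℕ) (hr : 2 ≤ r) (hc : 2 ≤ c)
    (p : Fin r → Fin c → ℝ) (hp : ∀ i j, 0 ≤ p i j)
    (hsum : ∑ i, ∑ j, p i j = 1)
    (t : ℕ) (ht1 : 1 ≤ t) (htc : t < c)
    (hS : Smax t (colMarg p) ≠ 1) :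
    0 ≤ lambdaT t p ∧ lambdaT t p ≤ 1 :=
  lambdaT_mem_unitInterval_general r c p hp hsum t htc hS
end

section
/- Let t be an integer with 1 ≤ t < c and S_t(p_{+·}) ≠ 1. If the table is independent, i.e., p i j = p_{i+} · p_{+j} for all i and j, then λ^{(t)}_{Y|X} = 0. -/
/-!
Under independence row `i` of the table is the column-marginal vector scaled by `p_{i+} ≥ 0`.
Since `S_t` is positively homogeneous, the row terms sum to `(∑ i, p_{i+}) S_t(p_{+·}) = S_t(p_{+·})`,
so the numerator of `λ^{(t)}_{Y|X}` vanishes.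
-/

lemma Smax_const_mul {n : ℕ} (t : ℕ) {a : ℝ} (ha : 0 ≤ a) (q : Fin n → ℝ) :
    Smax t (fun j => a * q j) = a * Smax t q := by
  have hfun : (fun T : Finset (Fin n) => ∑ j ∈ T, a * q j) =
      (a • ·) ∘ fun T : Finset (Fin n) => ∑ j ∈ T, q j := by
    ext T
    simp [Finset.mul_sum]
  rw [Smax, Smax, hfun, Set.image_comp, Set.image_smul, Real.sSup_smul_of_nonneg ha, smul_eq_mul]

lemma rowMarg_nonneg {r c : ℕ} {p : Fin r → Fin c → ℝ} (hp : ∀ i j, 0 ≤ p i j) (i : Fin r) :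
    0 ≤ rowMarg p i :=
  Finset.sum_nonneg fun j _ => hp i j

lemma Smax_row_eq_of_indep {r c : ℕ} (t : ℕ) {p : Fin r → Fin c → ℝ} (hp : ∀ i j, 0 ≤ p i j)
    (hind : ∀ i j, p i j = rowMarg p i * colMarg p j) (i : Fin r) :
    Smax t (p i) = rowMarg p i * Smax t (colMarg p) := by
  rw [← Smax_const_mul t (rowMarg_nonneg hp i)]
  exact congrArg (Smax t) (funext (hind i))

lemma sum_Smax_rows_eq_of_indep {r c : ℕ} (t : ℕ) {p : Fin r → Fin c → ℝ}
    (hp : ∀ i j, 0 ≤ p i j) (hsum : ∑ i, ∑ j, p i j = 1)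
    (hind : ∀ i j, p i j = rowMarg p i * colMarg p j) :
    ∑ i, Smax t (p i) = Smax t (colMarg p) := by
  simp_rw [Smax_row_eq_of_indep t hp hind, ← Finset.sum_mul]
  rw [show ∑ i, rowMarg p i = 1 from hsum, one_mul]

theorem lambdaT_eq_zero_of_indep_general
    (r c : ℕ)
    (p : Fin r → Fin c → ℝ) (hp : ∀ i j, 0 ≤ p i j)
    (hsum : ∑ i, ∑ j, p i j = 1)
    (t : ℕ)
    (hind : ∀ i j, p i j = rowMarg p i * colMarg p j) :
    lambdaT t p = 0 := by
  rw [lambdaT, sum_Smax_rows_eq_of_indep t hp hsum hind, sub_self, zero_div]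

/-- independence implies `λ^{(t)}_{Y|X} = 0`. -/
theorem lambdaT_eq_zero_of_indep
    (r c : ℕ) (hr : 2 ≤ r) (hc : 2 ≤ c)
    (p : Fin r → Fin c → ℝ) (hp : ∀ i j, 0 ≤ p i j)
    (hsum : ∑ i, ∑ j, p i j = 1)
    (t : ℕ) (ht1 : 1 ≤ t) (htc : t < c)
    (hS : Smax t (colMarg p) ≠ 1)
    (hind : ∀ i j, p i j = rowMarg p i * colMarg p j) :
    lambdaT t p = 0 :=
  lambdaT_eq_zero_of_indep_general r c p hp hsum t hind
end

section
/- Let t be an integer with 1 ≤ t < c and S_t(p_{+·}) ≠ 1. Then λ^{(t)}_{Y|X} = 1 if and only if p_{i+} = S_t(p_{i·}) for every row i = 1, …, r (i.e., each row of the table contains at most t nonzero cell probabilities). -/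
/-! Since `S_t(p_{i·}) ≤ p_{i+}` and the `p_{i+}` sum to `1`, the numerator of `λ^{(t)}` is at
most its denominator, with equality exactly when `S_t(p_{i·}) = p_{i+}` in every row. -/

/-- For `t > n` the defining set is empty and `sSup ∅ = 0`, so no bound on `t` is needed. -/
theorem Smax_le_sum {n : ℕ} (t : ℕ) {q : Fin n → ℝ} (hq : ∀ j, 0 ≤ q j) :
    Smax t q ≤ ∑ j, q j :=
  Real.sSup_le
    (by
      rintro _ ⟨T, -, rfl⟩
      exact Finset.sum_le_sum_of_subset_of_nonneg T.subset_univ fun j _ _ => hq j)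
    (Finset.sum_nonneg fun j _ => hq j)

theorem lambdaT_eq_one_iff_sum_Smax_eq_one {r c : ℕ} (t : ℕ) (p : Fin r → Fin c → ℝ)
    (hS : Smax t (colMarg p) ≠ 1) :
    lambdaT t p = 1 ↔ ∑ i, Smax t (p i) = 1 := by
  rw [lambdaT, div_eq_one_iff_eq (sub_ne_zero.mpr hS.symm), sub_left_inj]

theorem lambdaT_eq_one_iff_general
    (r c : ℕ)
    (p : Fin r → Fin c → ℝ) (hp : ∀ i j, 0 ≤ p i j)
    (hsum : ∑ i, ∑ j, p i j = 1)
    (t : ℕ)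
    (hS : Smax t (colMarg p) ≠ 1) :
    lambdaT t p = 1 ↔ ∀ i, rowMarg p i = Smax t (p i) := by
  rw [lambdaT_eq_one_iff_sum_Smax_eq_one t p hS, ← hsum,
    Finset.sum_eq_sum_iff_of_le fun i _ => Smax_le_sum t (hp i)]
  simp only [Finset.mem_univ, forall_const, rowMarg, eq_comm]

/-- `λ^{(t)}_{Y|X} = 1` iff `p_{i+} = S_t(p_{i·})` for every row `i`. -/
theorem lambdaT_eq_one_iff
    (r c : ℕ) (hr : 2 ≤ r) (hc : 2 ≤ c)
    (p : Fin r → Fin c → ℝ) (hp : ∀ i j, 0 ≤ p i j)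
    (hsum : ∑ i, ∑ j, p i j = 1)
    (t : ℕ) (ht1 : 1 ≤ t) (htc : t < c)
    (hS : Smax t (colMarg p) ≠ 1) :
    lambdaT t p = 1 ↔ ∀ i, rowMarg p i = Smax t (p i) :=
  lambdaT_eq_one_iff_general r c p hp hsum t hS
end

section
/- Assume p_{i+} > 0 for every row i. For every integer t with 1 ≤ t < c and S_t(p_{+·}) ≠ 1, the alternative measure dominates the original one: λ^{K(t)}_{Y|X} ≥ λ^{(t)}_{Y|X}. -/
/-!
By Cauchy–Schwarz (Sedrakyan's form) with the row marginals as weights, which sum to `1`,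
`(∑ i, S_t(p_{i·}))² ≤ ∑ i, S_t(p_{i·})² / p_{i+}`, so the numerator of `λ^{K(t)}` dominates that
of `λ^{(t)}`. The common denominator `1 - S_t(p_{+·})` is positive, because `S_t` of a nonnegative
vector is at most its total mass, here `1`, and `S_t(p_{+·}) ≠ 1`.
-/

theorem Smax_le_sum_of_nonneg {n t : ℕ} {q : Fin n → ℝ} (hq : ∀ j, 0 ≤ q j) :
    Smax t q ≤ ∑ j, q j :=
  Real.sSup_le (by
      rintro _ ⟨T, -, rfl⟩
      exact Finset.sum_le_sum_of_subset_of_nonneg T.subset_univ fun j _ _ => hq j)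
    (Finset.sum_nonneg fun j _ => hq j)

theorem Finset.sum_le_sqrt_sum_sq_div {ι : Type*} (s : Finset ι) (f : ι → ℝ) {w : ι → ℝ}
    (hw : ∀ i ∈ s, 0 < w i) (hw_sum : ∑ i ∈ s, w i = 1) :
    ∑ i ∈ s, f i ≤ √(∑ i ∈ s, f i ^ 2 / w i) := by
  have h := Finset.sq_sum_div_le_sum_sq_div s f hw
  rw [hw_sum, div_one] at h
  exact (le_abs_self _).trans (Real.abs_le_sqrt h)

theorem sum_rowMarg {r c : ℕ} (p : Fin r → Fin c → ℝ) :
    ∑ i, rowMarg p i = ∑ i, ∑ j, p i j :=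
  rfl

theorem sum_colMarg {r c : ℕ} (p : Fin r → Fin c → ℝ) :
    ∑ j, colMarg p j = ∑ i, ∑ j, p i j :=
  Finset.sum_comm

theorem lambdaKT_ge_lambdaT_general
    (r c : ℕ)
    (p : Fin r → Fin c → ℝ) (hp : ∀ i j, 0 ≤ p i j)
    (hsum : ∑ i, ∑ j, p i j = 1)
    (hpos : ∀ i, 0 < rowMarg p i)
    (t : ℕ)
    (hS : Smax t (colMarg p) ≠ 1) :
    lambdaT t p ≤ lambdaKT t p := by
  have hS_le : Smax t (colMarg p) ≤ 1 :=
    (Smax_le_sum_of_nonneg fun j => Finset.sum_nonneg fun i _ => hp i j).trans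
      (sum_colMarg p ▸ hsum).le
  have hden : 0 < 1 - Smax t (colMarg p) := sub_pos.2 (hS_le.lt_of_ne hS)
  have hnum : ∑ i, Smax t (p i) ≤ √(∑ i, Smax t (p i) ^ 2 / rowMarg p i) :=
    Finset.sum_le_sqrt_sum_sq_div _ _ (fun i _ => hpos i) (sum_rowMarg p ▸ hsum)
  unfold lambdaT lambdaKT
  gcongr

/-- `λ^{K(t)}_{Y|X} ≥ λ^{(t)}_{Y|X}`. -/
theorem lambdaKT_ge_lambdaT
    (r c : ℕ) (hr : 2 ≤ r) (hc : 2 ≤ c)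
    (p : Fin r → Fin c → ℝ) (hp : ∀ i j, 0 ≤ p i j)
    (hsum : ∑ i, ∑ j, p i j = 1)
    (hpos : ∀ i, 0 < rowMarg p i)
    (t : ℕ) (ht1 : 1 ≤ t) (htc : t < c)
    (hS : Smax t (colMarg p) ≠ 1) :
    lambdaT t p ≤ lambdaKT t p :=
  lambdaKT_ge_lambdaT_general r c p hp hsum hpos t hS
end

section
/- Assume p_{i+} > 0 for every row i. Let t be an integer with 1 ≤ t < c and S_t(p_{+·}) ≠ 1. If the quasi-independence condition S_k(p_{i·}) = p_{i+} · S_k(p_{+·}) holds for every row i and every integer k with 1 ≤ k ≤ t (equivalently, the k-th largest entry of each row i equals p_{i+} times the k-th largest column marginal for all k ≤ t), then λ^{K(t)}_{Y|X} = 0. -/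
/-!
Quasi-independence at level `t` makes each term `S_t(p_{i·})² / p_{i+}` equal to
`p_{i+} · S_t(p_{+·})²`; since the row marginals sum to one, the square root is
`S_t(p_{+·}) ≥ 0` and the numerator of `λ^{K(t)}` vanishes.
-/

open Finset

theorem Smax_nonneg {n : ℕ} {t : ℕ} {q : Fin n → ℝ} (hq : ∀ j, 0 ≤ q j) (htn : t ≤ n) :
    0 ≤ Smax t q := by
  obtain ⟨T, -, hT⟩ := exists_subset_card_eq (s := (univ : Finset (Fin n))) (by simpa using htn)
  have hbdd : BddAbove ((fun T : Finset (Fin n) => ∑ j ∈ T, q j) '' {T | T.card = t}) :=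
    ((Set.toFinite _).image _).bddAbove
  exact (sum_nonneg fun j _ => hq j).trans (le_csSup hbdd ⟨T, hT, rfl⟩)

theorem sum_sq_div_eq_sq_of_eq_mul {ι : Type*} [Fintype ι] {w a : ι → ℝ} {s : ℝ}
    (hw : ∀ i, 0 < w i) (hw1 : ∑ i, w i = 1) (ha : ∀ i, a i = w i * s) :
    ∑ i, a i ^ 2 / w i = s ^ 2 := by
  have hterm : ∀ i, a i ^ 2 / w i = w i * s ^ 2 := fun i => by
    rw [ha i]
    field_simp [(hw i).ne']
  rw [sum_congr rfl fun i _ => hterm i, ← sum_mul, hw1, one_mul]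

theorem lambdaKT_eq_zero_of_quasiIndep_general
    (r c : ℕ)
    (p : Fin r → Fin c → ℝ) (hp : ∀ i j, 0 ≤ p i j)
    (hsum : ∑ i, ∑ j, p i j = 1)
    (hpos : ∀ i, 0 < rowMarg p i)
    (t : ℕ) (ht1 : 1 ≤ t) (htc : t < c)
    (hqi : ∀ i, ∀ k, 1 ≤ k → k ≤ t →
      Smax k (p i) = rowMarg p i * Smax k (colMarg p)) :
    lambdaKT t p = 0 := by
  have hS : 0 ≤ Smax t (colMarg p) :=
    Smax_nonneg (fun j => sum_nonneg fun i _ => hp i j) htc.le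
  have hsq : ∑ i, Smax t (p i) ^ 2 / rowMarg p i = Smax t (colMarg p) ^ 2 :=
    sum_sq_div_eq_sq_of_eq_mul hpos hsum fun i => hqi i t ht1 le_rfl
  rw [lambdaKT, hsq, Real.sqrt_sq hS, sub_self, zero_div]

/-- quasi-independence up to level `t` implies `λ^{K(t)}_{Y|X} = 0`. -/
theorem lambdaKT_eq_zero_of_quasiIndep
    (r c : ℕ) (hr : 2 ≤ r) (hc : 2 ≤ c)
    (p : Fin r → Fin c → ℝ) (hp : ∀ i j, 0 ≤ p i j)
    (hsum : ∑ i, ∑ j, p i j = 1)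
    (hpos : ∀ i, 0 < rowMarg p i)
    (t : ℕ) (ht1 : 1 ≤ t) (htc : t < c)
    (hS : Smax t (colMarg p) ≠ 1)
    (hqi : ∀ i, ∀ k, 1 ≤ k → k ≤ t →
      Smax k (p i) = rowMarg p i * Smax k (colMarg p)) :
    lambdaKT t p = 0 :=
  lambdaKT_eq_zero_of_quasiIndep_general r c p hp hsum hpos t ht1 htc hqi
end

section
/- Assume p_{i+} > 0 for every row i and max_j p_{+j} ≠ 1. Then λ^{K(1)}_{Y|X} = 0 if and only if for every row i the maximum entry of row i equals p_{i+} times the maximum column marginal: max_j p_{ij} = p_{i+} · max_j p_{+j}. -/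
lemma Smax_one_eq_sSup_range {n : ℕ} (q : Fin n → ℝ) : Smax 1 q = sSup (Set.range q) := by
  rw [Smax]
  congr 1
  ext x
  simp only [Set.mem_image, Set.mem_ofPred_eq, Set.mem_range, Finset.card_eq_one]
  constructor
  · rintro ⟨T, ⟨j, rfl⟩, rfl⟩
    exact ⟨j, (Finset.sum_singleton _ _).symm⟩
  · rintro ⟨j, rfl⟩
    exact ⟨{j}, ⟨j, rfl⟩, Finset.sum_singleton _ _⟩

lemma le_Smax_one {n : ℕ} (q : Fin n → ℝ) (j : Fin n) : q j ≤ Smax 1 q := by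
  rw [Smax_one_eq_sSup_range]
  exact le_csSup (Set.finite_range q).bddAbove ⟨j, rfl⟩

lemma exists_Smax_one_eq {n : ℕ} [NeZero n] (q : Fin n → ℝ) : ∃ j, Smax 1 q = q j := by
  rw [Smax_one_eq_sSup_range]
  obtain ⟨j, hj⟩ := (Set.range_nonempty q).csSup_mem (Set.finite_range q)
  exact ⟨j, hj.symm⟩

lemma Smax_one_pos_of_sum_pos {n : ℕ} (q : Fin n → ℝ) (h : 0 < ∑ j, q j) : 0 < Smax 1 q := by
  have hsum_le : ∑ j, q j ≤ n * Smax 1 q := by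
    simpa using Finset.sum_le_card_nsmul Finset.univ q _ fun j _ => le_Smax_one q j
  exact pos_of_mul_pos_right (h.trans_le hsum_le) n.cast_nonneg

lemma Smax_one_colMarg_le_sum {r c : ℕ} [NeZero c] (p : Fin r → Fin c → ℝ) :
    Smax 1 (colMarg p) ≤ ∑ i, Smax 1 (p i) := by
  obtain ⟨j, hj⟩ := exists_Smax_one_eq (colMarg p)
  rw [hj]
  exact Finset.sum_le_sum fun i _ => le_Smax_one (p i) j

section WeightedSquares

variable {ι K : Type*} [Field K] (s : Finset ι) (a w : ι → K)

lemma sum_mul_div_sub_sq_eq (hw : ∀ i ∈ s, w i ≠ 0) (hw1 : ∑ i ∈ s, w i = 1) :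
    ∑ i ∈ s, w i * (a i / w i - ∑ k ∈ s, a k) ^ 2 =
      ∑ i ∈ s, a i ^ 2 / w i - (∑ k ∈ s, a k) ^ 2 := by
  set A := ∑ k ∈ s, a k
  have expand : ∀ i ∈ s,
      w i * (a i / w i - A) ^ 2 = a i ^ 2 / w i - 2 * A * a i + A ^ 2 * w i := by
    intro i hi
    field_simp [hw i hi]
    ring
  rw [Finset.sum_congr rfl expand, Finset.sum_add_distrib, Finset.sum_sub_distrib,
    ← Finset.mul_sum, ← Finset.mul_sum, hw1]
  ring

variable [LinearOrder K] [IsStrictOrderedRing K]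

lemma sum_sq_div_eq_sq_sum_iff (hw : ∀ i ∈ s, 0 < w i) (hw1 : ∑ i ∈ s, w i = 1) :
    ∑ i ∈ s, a i ^ 2 / w i = (∑ k ∈ s, a k) ^ 2 ↔ ∀ i ∈ s, a i = w i * ∑ k ∈ s, a k := by
  rw [← sub_eq_zero, ← sum_mul_div_sub_sq_eq s a w (fun i hi => (hw i hi).ne') hw1,
    Finset.sum_eq_zero_iff_of_nonneg fun i hi => mul_nonneg (hw i hi).le (sq_nonneg _)]
  refine forall₂_congr fun i hi => ?_
  rw [mul_eq_zero, or_iff_right (hw i hi).ne', sq_eq_zero_iff, sub_eq_zero,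
    div_eq_iff (hw i hi).ne', mul_comm]

lemma sum_sq_div_eq_sq_iff_of_le {M : K} (hw : ∀ i ∈ s, 0 < w i) (hw1 : ∑ i ∈ s, w i = 1)
    (hM : 0 ≤ M) (hMa : M ≤ ∑ k ∈ s, a k) :
    ∑ i ∈ s, a i ^ 2 / w i = M ^ 2 ↔ ∀ i ∈ s, a i = w i * M := by
  constructor
  · intro hS
    have hCS : (∑ k ∈ s, a k) ^ 2 ≤ M ^ 2 := by
      simpa [hw1, hS] using Finset.sq_sum_div_le_sum_sq_div s a hw
    have hAM : ∑ k ∈ s, a k = M :=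
      le_antisymm ((pow_le_pow_iff_left₀ (hM.trans hMa) hM two_ne_zero).mp hCS) hMa
    rw [← hAM] at hS ⊢
    exact (sum_sq_div_eq_sq_sum_iff s a w hw hw1).mp hS
  · intro h
    have hAM : ∑ k ∈ s, a k = M := by
      rw [Finset.sum_congr rfl h, ← Finset.sum_mul, hw1, one_mul]
    rw [← hAM] at h ⊢
    exact (sum_sq_div_eq_sq_sum_iff s a w hw hw1).mpr h

end WeightedSquares

theorem lambdaK1_eq_zero_iff_general
    (r c : ℕ) (hc : 2 ≤ c)
    (p : Fin r → Fin c → ℝ)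
    (hsum : ∑ i, ∑ j, p i j = 1)
    (hpos : ∀ i, 0 < rowMarg p i)
    (hS : Smax 1 (colMarg p) ≠ 1) :
    lambdaKT 1 p = 0 ↔ ∀ i, Smax 1 (p i) = rowMarg p i * Smax 1 (colMarg p) := by
  have : NeZero c := ⟨by omega⟩
  have hM : 0 < Smax 1 (colMarg p) := by
    refine Smax_one_pos_of_sum_pos _ ?_
    simp only [colMarg]
    rw [Finset.sum_comm, hsum]
    exact one_pos
  have hrow : ∑ i, rowMarg p i = 1 := hsum
  have hsq_nonneg : 0 ≤ ∑ i, Smax 1 (p i) ^ 2 / rowMarg p i :=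
    Finset.sum_nonneg fun i _ => div_nonneg (sq_nonneg _) (hpos i).le
  rw [lambdaKT, div_eq_zero_iff, or_iff_left (sub_ne_zero.mpr hS.symm), sub_eq_zero,
    Real.sqrt_eq_iff_eq_sq hsq_nonneg hM.le,
    sum_sq_div_eq_sq_iff_of_le _ _ _ (fun i _ => hpos i) hrow hM.le
      (Smax_one_colMarg_le_sum p)]
  simp only [Finset.mem_univ, forall_const]

/-- `λ^{K(1)}_{Y|X} = 0` iff for every row `i`, the maximum entry of
row `i` equals `p_{i+}` times the maximum column marginal.  (Here `Smax 1 q` is the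
maximum entry of `q`.) -/
theorem lambdaK1_eq_zero_iff
    (r c : ℕ) (hr : 2 ≤ r) (hc : 2 ≤ c)
    (p : Fin r → Fin c → ℝ) (hp : ∀ i j, 0 ≤ p i j)
    (hsum : ∑ i, ∑ j, p i j = 1)
    (hpos : ∀ i, 0 < rowMarg p i)
    (hS : Smax 1 (colMarg p) ≠ 1) :
    lambdaKT 1 p = 0 ↔ ∀ i, Smax 1 (p i) = rowMarg p i * Smax 1 (colMarg p) :=
  lambdaK1_eq_zero_iff_general r c hc p hsum hpos hS
end

section
/- Assume p_{i+} > 0 for every row i. Let t be an integer with 2 ≤ t < c and S_t(p_{+·}) ≠ 1. Suppose the quasi-independence condition S_k(p_{i·}) = p_{i+} · S_k(p_{+·}) holds for every row i and every integer k with 1 ≤ k ≤ t − 1. If λ^{K(t)}_{Y|X} = 0, then S_t(p_{i·}) = p_{i+} · S_t(p_{+·}) for every row i (equivalently, the t-th largest entry of each row i equals p_{i+} times the t-th largest column marginal). -/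
open Finset

section Smax

variable {n : ℕ} {t : ℕ}

lemma bddAbove_smax_image (q : Fin n → ℝ) :
    BddAbove ((fun T : Finset (Fin n) => ∑ j ∈ T, q j) '' {T : Finset (Fin n) | T.card = t}) :=
  ((Set.toFinite _).image _).bddAbove

lemma sum_le_smax (q : Fin n → ℝ) {T : Finset (Fin n)} (hT : T.card = t) :
    ∑ j ∈ T, q j ≤ Smax t q :=
  le_csSup (bddAbove_smax_image q) ⟨T, hT, rfl⟩

lemma exists_sum_eq_smax (q : Fin n → ℝ) (h : t ≤ n) :
    ∃ T : Finset (Fin n), T.card = t ∧ ∑ j ∈ T, q j = Smax t q := by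
  obtain ⟨T, -, hT⟩ := exists_subset_card_eq (s := (univ : Finset (Fin n))) (by simpa using h)
  have hne : {T : Finset (Fin n) | T.card = t}.Nonempty := ⟨T, hT⟩
  exact (hne.image _).csSup_mem ((Set.toFinite _).image _)

lemma smax_eq_zero_of_lt (q : Fin n → ℝ) (h : n < t) : Smax t q = 0 := by
  have hempty : {T : Finset (Fin n) | T.card = t} = ∅ :=
    Set.eq_empty_of_forall_notMem fun T (hT : T.card = t) =>
      (card_le_univ T).not_gt (by simpa [hT] using h)
  rw [Smax, hempty, Set.image_empty, Real.sSup_empty]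

lemma smax_sum_le_sum_smax {ι : Type*} (s : Finset ι) (f : ι → Fin n → ℝ) :
    Smax t (fun j => ∑ i ∈ s, f i j) ≤ ∑ i ∈ s, Smax t (f i) := by
  rcases le_or_gt t n with htn | hnt
  · obtain ⟨T, hT, hmax⟩ := exists_sum_eq_smax (fun j => ∑ i ∈ s, f i j) htn
    rw [← hmax, sum_comm]
    exact sum_le_sum fun i _ => sum_le_smax (f i) hT
  · simp only [smax_eq_zero_of_lt _ hnt, sum_const_zero, le_refl]

end Smax

lemma eq_mul_of_sum_sq_div_eq_sq {ι : Type*} [Fintype ι] {a w : ι → ℝ} {S : ℝ}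
    (hw : ∀ i, 0 < w i) (hw1 : ∑ i, w i = 1) (hS : 0 ≤ S) (hSa : S ≤ ∑ i, a i)
    (hsq : ∑ i, a i ^ 2 / w i = S ^ 2) (i : ι) : a i = w i * S := by
  have hexpand : ∀ i, (a i - w i * S) ^ 2 / w i = a i ^ 2 / w i - 2 * S * a i + S ^ 2 * w i := by
    intro i
    field_simp [(hw i).ne']
    ring
  have hchi : ∑ i, (a i - w i * S) ^ 2 / w i = 2 * S * (S - ∑ i, a i) := by
    rw [sum_congr rfl fun i _ => hexpand i, sum_add_distrib, sum_sub_distrib, ← mul_sum,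
      ← mul_sum, hsq, hw1]
    ring
  have hnonneg : ∀ i ∈ univ, 0 ≤ (a i - w i * S) ^ 2 / w i :=
    fun i _ => div_nonneg (sq_nonneg _) (hw i).le
  have hzero : ∑ i, (a i - w i * S) ^ 2 / w i = 0 :=
    le_antisymm (hchi ▸ mul_nonpos_of_nonneg_of_nonpos (by positivity) (by linarith))
      (sum_nonneg hnonneg)
  have hi := (sum_eq_zero_iff_of_nonneg hnonneg).mp hzero i (mem_univ i)
  rw [div_eq_zero_iff, or_iff_left (hw i).ne', sq_eq_zero_iff, sub_eq_zero] at hi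
  exact hi

theorem lambdaKT_zero_step_general
    (r c : ℕ)
    (p : Fin r → Fin c → ℝ)
    (hsum : ∑ i, ∑ j, p i j = 1)
    (hpos : ∀ i, 0 < rowMarg p i)
    (t : ℕ)
    (hS : Smax t (colMarg p) ≠ 1)
    (hK : lambdaKT t p = 0) :
    ∀ i, Smax t (p i) = rowMarg p i * Smax t (colMarg p) := by
  have hnum : Real.sqrt (∑ i, Smax t (p i) ^ 2 / rowMarg p i) = Smax t (colMarg p) := by
    rw [lambdaKT, div_eq_zero_iff, sub_eq_zero, or_iff_left (sub_ne_zero.mpr hS.symm)] at hK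
    exact hK
  have hS0 : 0 ≤ Smax t (colMarg p) := hnum ▸ Real.sqrt_nonneg _
  have hsq : ∑ i, Smax t (p i) ^ 2 / rowMarg p i = Smax t (colMarg p) ^ 2 := by
    rw [← hnum, Real.sq_sqrt (sum_nonneg fun i _ => div_nonneg (sq_nonneg _) (hpos i).le)]
  exact eq_mul_of_sum_sq_div_eq_sq hpos hsum hS0 (smax_sum_le_sum_smax univ p) hsq

/-- induction step — if quasi-independence holds up to level `t-1` and
`λ^{K(t)}_{Y|X} = 0`, then `S_t(p_{i·}) = p_{i+} · S_t(p_{+·})` for every row. -/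
theorem lambdaKT_zero_step
    (r c : ℕ) (hr : 2 ≤ r) (hc : 2 ≤ c)
    (p : Fin r → Fin c → ℝ) (hp : ∀ i j, 0 ≤ p i j)
    (hsum : ∑ i, ∑ j, p i j = 1)
    (hpos : ∀ i, 0 < rowMarg p i)
    (t : ℕ) (ht2 : 2 ≤ t) (htc : t < c)
    (hS : Smax t (colMarg p) ≠ 1)
    (hqi : ∀ i, ∀ k, 1 ≤ k → k ≤ t - 1 →
      Smax k (p i) = rowMarg p i * Smax k (colMarg p))
    (hK : lambdaKT t p = 0) :
    ∀ i, Smax t (p i) = rowMarg p i * Smax t (colMarg p) :=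
  lambdaKT_zero_step_general r c p hsum hpos t hS hK
end

section
/- Assume p_{i+} > 0 for every row i and p_{+j} > 0 for every column j (so that S_k(p_{+·}) < 1 for all k with 1 ≤ k ≤ c − 1). If λ^{K(k)}_{Y|X} = 0 for every k = 1, …, c − 1, then the table is completely independent: p i j = p_{i+} · p_{+j} for all i and j. -/
lemma smax_finite {n : ℕ} (t : ℕ) (q : Fin n → ℝ) :
    ((fun T : Finset (Fin n) => ∑ j ∈ T, q j) '' {T : Finset (Fin n) | T.card = t}).Finite :=
  (Set.toFinite _).image _

lemma sum_le_Smax {n t : ℕ} (q : Fin n → ℝ) {T : Finset (Fin n)} (hT : T.card = t) :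
    ∑ j ∈ T, q j ≤ Smax t q :=
  le_csSup (smax_finite t q).bddAbove ⟨T, hT, rfl⟩

lemma exists_Smax {n t : ℕ} (q : Fin n → ℝ) (ht : t ≤ n) :
    ∃ T : Finset (Fin n), T.card = t ∧ ∑ j ∈ T, q j = Smax t q := by
  obtain ⟨T, -, hT⟩ := Finset.exists_subset_card_eq
    (show t ≤ (Finset.univ : Finset (Fin n)).card by simpa using ht)
  have hne : ((fun T : Finset (Fin n) => ∑ j ∈ T, q j) ''
      {T : Finset (Fin n) | T.card = t}).Nonempty := ⟨_, T, hT, rfl⟩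
  obtain ⟨T', hT', h⟩ := hne.csSup_mem (smax_finite t q)
  exact ⟨T', hT', h⟩

lemma Smax_zero {n : ℕ} (q : Fin n → ℝ) : Smax 0 q = 0 := by
  apply le_antisymm
  · refine csSup_le ⟨(0:ℝ), ⟨∅, by simp, by simp⟩⟩ ?_
    rintro x ⟨T, hT, rfl⟩
    simp only [Set.mem_setOf_eq, Finset.card_eq_zero] at hT
    simp [hT]
  · simpa using sum_le_Smax q (T := ∅) rfl

lemma insert_optimal {n k : ℕ} (q : Fin n → ℝ) (hk : k + 1 ≤ n)
    {T : Finset (Fin n)} (hcard : T.card = k) (hopt : ∑ j ∈ T, q j = Smax k q)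
    {x : Fin n} (hx : x ∉ T) (hmax : ∀ y, y ∉ T → q y ≤ q x) :
    ∑ j ∈ insert x T, q j = Smax (k+1) q := by
  apply le_antisymm (sum_le_Smax q (by rw [Finset.card_insert_of_notMem hx, hcard]))
  obtain ⟨C, hCcard, hC⟩ := exists_Smax q hk
  obtain ⟨y, hyC, hyT⟩ : ∃ y ∈ C, y ∉ T := by
    by_contra h; push_neg at h
    have := Finset.card_le_card (fun z hz => h z hz)
    omega
  have h1 : ∑ j ∈ C.erase y, q j ≤ Smax k q :=
    sum_le_Smax q (by rw [Finset.card_erase_of_mem hyC, hCcard]; omega)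
  have h2 : ∑ j ∈ C.erase y, q j + q y = ∑ j ∈ C, q j := Finset.sum_erase_add _ _ hyC
  rw [Finset.sum_insert hx, ← hC, ← h2, hopt]
  have := hmax y hyT
  linarith

/-- Key lemma: for every optimal `T` of card `k ≤ c`, row sums over `T` are
proportional to row marginals. -/
lemma key_lemma {r c : ℕ} (hc : 2 ≤ c)
    (p : Fin r → Fin c → ℝ) (hp : ∀ i j, 0 ≤ p i j)
    (hsum : ∑ i, ∑ j, p i j = 1)
    (hrpos : ∀ i, 0 < rowMarg p i)
    (hcpos : ∀ j, 0 < colMarg p j)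
    (hK : ∀ k, 1 ≤ k → k ≤ c - 1 → lambdaKT k p = 0)
    (k : ℕ) (hkc : k ≤ c) (T : Finset (Fin c)) (hTcard : T.card = k)
    (hTopt : ∑ j ∈ T, colMarg p j = Smax k (colMarg p)) :
    ∀ i, ∑ j ∈ T, p i j = Smax k (colMarg p) * rowMarg p i := by
  have hwsum : ∑ i, rowMarg p i = 1 := hsum
  have hcsum : ∑ j, colMarg p j = 1 := by
    simp only [colMarg]; rw [Finset.sum_comm]; exact hsum
  rcases Nat.eq_zero_or_pos k with hk0 | hk1
  · subst hk0
    have hT0 : T = ∅ := Finset.card_eq_zero.mp hTcard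
    subst hT0
    intro i; simp at hTopt ⊢; simp [← hTopt]
  rcases eq_or_lt_of_le hkc with hkeq | hklt
  · have hTu : T = Finset.univ := by
      apply Finset.eq_univ_of_card; simpa [hkeq] using hTcard
    subst hTu
    have hS1 : Smax k (colMarg p) = 1 := by rw [← hTopt]; exact hcsum
    intro i; rw [hS1, one_mul, rowMarg]
  set s := Smax k (colMarg p) with hs
  set w := rowMarg p with hw
  set A := fun i => Smax k (p i) with hA
  have hTne : T.Nonempty := Finset.card_pos.mp (by omega)
  have hspos : 0 < s := by
    rw [← hTopt]
    exact Finset.sum_pos (fun j _ => hcpos j) hTne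
  have hslt : s < 1 := by
    obtain ⟨x, hx⟩ : ∃ x : Fin c, x ∉ T := by
      by_contra h; push_neg at h
      have : (Finset.univ : Finset (Fin c)) ⊆ T := fun z _ => h z
      have := Finset.card_le_card this
      simp at this; omega
    rw [← hTopt, ← hcsum]
    exact Finset.sum_lt_sum_of_subset (Finset.subset_univ T) (Finset.mem_univ x) hx
      (hcpos x) (fun j _ _ => (hcpos j).le)
  have hKk := hK k hk1 (by omega)
  rw [lambdaKT, div_eq_zero_iff] at hKk
  have hsqrt : Real.sqrt (∑ i, A i ^ 2 / w i) = s := by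
    rcases hKk with h | h
    · linarith [sub_eq_zero.mp h]
    · linarith [sub_eq_zero.mp h]
  have hQnn : 0 ≤ ∑ i, A i ^ 2 / w i :=
    Finset.sum_nonneg fun i _ => div_nonneg (sq_nonneg _) (hrpos i).le
  have hQ : ∑ i, A i ^ 2 / w i = s ^ 2 := by
    rw [← hsqrt, Real.sq_sqrt hQnn]
  have hrowle : ∀ i, ∑ j ∈ T, p i j ≤ A i := fun i => sum_le_Smax (p i) hTcard
  have hsA : s ≤ ∑ i, A i := by
    have : s = ∑ i, ∑ j ∈ T, p i j := by
      rw [← hTopt]; simp only [colMarg]; rw [Finset.sum_comm]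
    rw [this]
    exact Finset.sum_le_sum fun i _ => hrowle i
  have hE : ∑ i, (A i - s * w i) ^ 2 / w i = 2 * s * (s - ∑ i, A i) := by
    have : ∀ i, (A i - s * w i) ^ 2 / w i = A i ^ 2 / w i - 2 * s * A i + s ^ 2 * w i := by
      intro i
      have hwne : w i ≠ 0 := (hrpos i).ne'
      field_simp
      ring
    rw [Finset.sum_congr rfl fun i _ => this i, Finset.sum_add_distrib,
      Finset.sum_sub_distrib, hQ, ← Finset.mul_sum, ← Finset.mul_sum, hwsum]
    ring
  have hEnn : 0 ≤ ∑ i, (A i - s * w i) ^ 2 / w i :=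
    Finset.sum_nonneg fun i _ => div_nonneg (sq_nonneg _) (hrpos i).le
  have hE0 : ∑ i, (A i - s * w i) ^ 2 / w i = 0 := by
    have : 2 * s * (s - ∑ i, A i) ≤ 0 := by nlinarith
    linarith [hE ▸ hEnn, this, hE]
  have hAi : ∀ i, A i = s * w i := by
    intro i
    have := (Finset.sum_eq_zero_iff_of_nonneg
      (fun i _ => div_nonneg (sq_nonneg (A i - s * w i)) (hrpos i).le)).mp hE0 i
      (Finset.mem_univ i)
    have h2 : (A i - s * w i) ^ 2 = 0 := by
      rcases div_eq_zero_iff.mp this with h | h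
      · exact h
      · exact absurd h (hrpos i).ne'
    have := pow_eq_zero_iff (n := 2) (by norm_num) |>.mp h2
    linarith
  have hsum2 : ∑ i, (s * w i - ∑ j ∈ T, p i j) = 0 := by
    rw [Finset.sum_sub_distrib, ← Finset.mul_sum, hwsum, mul_one]
    have : ∑ i, ∑ j ∈ T, p i j = s := by
      rw [← hTopt]; simp only [colMarg]; rw [Finset.sum_comm]
    rw [this, sub_self]
  intro i
  have := (Finset.sum_eq_zero_iff_of_nonneg
    (fun i _ => by have := hrowle i; rw [hAi i] at this; linarith)).mp hsum2 i
    (Finset.mem_univ i)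
  linarith

/-- if `λ^{K(k)}_{Y|X} = 0` for all `k = 1, …, c-1`, then the table is
completely independent. -/
theorem indep_of_lambdaKT_all_zero
    (r c : ℕ) (hr : 2 ≤ r) (hc : 2 ≤ c)
    (p : Fin r → Fin c → ℝ) (hp : ∀ i j, 0 ≤ p i j)
    (hsum : ∑ i, ∑ j, p i j = 1)
    (hrpos : ∀ i, 0 < rowMarg p i)
    (hcpos : ∀ j, 0 < colMarg p j)
    (hK : ∀ k, 1 ≤ k → k ≤ c - 1 → lambdaKT k p = 0) :
    ∀ i j, p i j = rowMarg p i * colMarg p j := by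
  have key := key_lemma hc p hp hsum hrpos hcpos hK
  -- build a nested chain of optimal sets
  have chain : ∀ k, k ≤ c → ∃ T : Finset (Fin c), T.card = k ∧
      (∑ j ∈ T, colMarg p j = Smax k (colMarg p)) ∧
      ∀ j ∈ T, ∀ i, p i j = rowMarg p i * colMarg p j := by
    intro k
    induction k with
    | zero => intro _; exact ⟨∅, by simp, by simp [Smax_zero], by simp⟩
    | succ k ih =>
      intro hk1
      obtain ⟨T, hTcard, hTopt, hTindep⟩ := ih (by omega)
      have hcompl : (Tᶜ : Finset (Fin c)).Nonempty := by
        rw [← Finset.card_pos, Finset.card_compl, hTcard]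
        simp; omega
      obtain ⟨x, hxmem, hxmax⟩ := Finset.exists_max_image (Tᶜ) (colMarg p) hcompl
      have hxT : x ∉ T := Finset.mem_compl.mp hxmem
      have hmax : ∀ y, y ∉ T → colMarg p y ≤ colMarg p x := fun y hy =>
        hxmax y (Finset.mem_compl.mpr hy)
      have hT'opt : ∑ j ∈ insert x T, colMarg p j = Smax (k+1) (colMarg p) :=
        insert_optimal (colMarg p) hk1 hTcard hTopt hxT hmax
      refine ⟨insert x T, by rw [Finset.card_insert_of_notMem hxT, hTcard], hT'opt, ?_⟩
      have h1 := key (k+1) hk1 (insert x T)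
        (by rw [Finset.card_insert_of_notMem hxT, hTcard]) hT'opt
      have h2 := key k (by omega) T hTcard hTopt
      have hcolx : colMarg p x = Smax (k+1) (colMarg p) - Smax k (colMarg p) := by
        rw [← hT'opt, ← hTopt, Finset.sum_insert hxT]; ring
      intro j hj i
      rcases Finset.mem_insert.mp hj with hjx | hjT
      · subst hjx
        have : p i j = Smax (k+1) (colMarg p) * rowMarg p i - Smax k (colMarg p) * rowMarg p i := by
          rw [← h1 i, ← h2 i, Finset.sum_insert hxT]; ring
        rw [this, hcolx]; ring
      · exact hTindep j hjT i
  obtain ⟨T, hTcard, -, hTindep⟩ := chain c le_rfl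
  have hTu : T = Finset.univ := Finset.eq_univ_of_card _ (by simpa using hTcard)
  intro i j
  exact hTindep j (hTu ▸ Finset.mem_univ j) i
end
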